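/- arXiv:1001.1188 — 5 statements merged into one kernel-verified Lean document; each statement's English description precedes it below -/
import Mathlib

section
/- Let A be a finite ring and M, N_1, N_2 finite left A-modules such that M ≅ N_1 ⊕ N_2, Hom_A(N_1, N_2) = 0 and Hom_A(N_2, N_1) = 0. Then the number of submodules L of M with L ≅ N_2 and M/L ≅ N_1 equals 1. -/
/-!
A submodule `W ≅ N₂` lies in every submodule `U` with `M/U ≅ N₁`: the composite
`W ↪ M ↠ M/U` is, up to isomorphism, a map `N₂ → N₁`, hence zero. Applied in both directions
this leaves at most one submodule with `U ≅ N₂` and `M/U ≅ N₁`, and the kernel of the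
projection `M ≅ N₁ × N₂ → N₁` is one.
-/

/-- The Hall number `G^M_{N L}`: the number of submodules `U ⊆ M` with
`U ≅ L` and `M/U ≅ N`. -/
noncomputable def hallNum (A : Type*) [Ring A] (M N L : Type*)
    [AddCommGroup M] [Module A M] [AddCommGroup N] [Module A N]
    [AddCommGroup L] [Module A L] : ℕ :=
  Nat.card {U : Submodule A M // Nonempty (U ≃ₗ[A] L) ∧ Nonempty ((M ⧸ U) ≃ₗ[A] N)}

section

open LinearMap

variable {A : Type*} [Ring A] {M N₁ N₂ : Type*}
  [AddCommGroup M] [Module A M] [AddCommGroup N₁] [Module A N₁] [AddCommGroup N₂] [Module A N₂]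

theorem LinearMap.eq_zero_of_equiv_of_forall_eq_zero {P Q : Type*} [AddCommGroup P] [Module A P]
    [AddCommGroup Q] [Module A Q] (eP : P ≃ₗ[A] N₂) (eQ : Q ≃ₗ[A] N₁)
    (h : ∀ f : N₂ →ₗ[A] N₁, f = 0) (φ : P →ₗ[A] Q) : φ = 0 :=
  (eP.arrowCongrAddEquiv eQ).injective (by rw [h (eP.arrowCongrAddEquiv eQ φ), map_zero])

theorem Submodule.le_of_forall_linearMap_quotient_eq_zero {U W : Submodule A M}
    (h : ∀ φ : W →ₗ[A] M ⧸ U, φ = 0) : W ≤ U := by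
  rw [← W.range_subtype, ← U.ker_mkQ]
  exact range_le_ker_iff.mpr (h _)

theorem Submodule.le_of_equiv_of_quotient_equiv {U W : Submodule A M}
    (hW : Nonempty (W ≃ₗ[A] N₂)) (hU : Nonempty ((M ⧸ U) ≃ₗ[A] N₁))
    (h : ∀ f : N₂ →ₗ[A] N₁, f = 0) : W ≤ U :=
  le_of_forall_linearMap_quotient_eq_zero
    (eq_zero_of_equiv_of_forall_eq_zero hW.some hU.some h)

theorem Submodule.exists_equiv_and_quotient_equiv_of_equiv_prod (e : M ≃ₗ[A] N₁ × N₂) :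
    ∃ U : Submodule A M, Nonempty (U ≃ₗ[A] N₂) ∧ Nonempty ((M ⧸ U) ≃ₗ[A] N₁) := by
  set π : M →ₗ[A] N₁ := LinearMap.fst A N₁ N₂ ∘ₗ e.toLinearMap
  have hπ : Function.Surjective π := (fst_surjective (R := A) (M₂ := N₂)).comp e.surjective
  have hker : (range (inr A N₁ N₂)).map e.symm.toLinearMap = ker π := by
    rw [ker_comp, ker_fst, ← comap_equiv_eq_map_symm]
  exact ⟨ker π, ⟨((LinearEquiv.ofInjective (inr A N₁ N₂) inr_injective).trans
    (e.symm.ofSubmodules _ _ hker)).symm⟩, ⟨π.quotKerEquivOfSurjective hπ⟩⟩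

end

theorem hallNum_eq_one_of_no_homs_general
    (A : Type*) [Ring A]
    (M N₁ N₂ : Type*)
    [AddCommGroup M] [Module A M]
    [AddCommGroup N₁] [Module A N₁]
    [AddCommGroup N₂] [Module A N₂]
    (hM : Nonempty (M ≃ₗ[A] N₁ × N₂))
    (h21 : ∀ f : N₂ →ₗ[A] N₁, f = 0) :
    hallNum A M N₁ N₂ = 1 := by
  obtain ⟨W, hW⟩ := Submodule.exists_equiv_and_quotient_equiv_of_equiv_prod hM.some
  rw [hallNum, Nat.card_eq_one_iff_unique]
  refine ⟨⟨fun U V ↦ Subtype.ext (le_antisymm ?_ ?_)⟩, ⟨⟨W, hW⟩⟩⟩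
  · exact Submodule.le_of_equiv_of_quotient_equiv U.2.1 V.2.2 h21
  · exact Submodule.le_of_equiv_of_quotient_equiv V.2.1 U.2.2 h21

theorem hallNum_eq_one_of_no_homs
    (A : Type*) [Ring A] [Finite A]
    (M N₁ N₂ : Type*)
    [AddCommGroup M] [Module A M] [Finite M]
    [AddCommGroup N₁] [Module A N₁] [Finite N₁]
    [AddCommGroup N₂] [Module A N₂] [Finite N₂]
    (hM : Nonempty (M ≃ₗ[A] N₁ × N₂))
    (h12 : ∀ f : N₁ →ₗ[A] N₂, f = 0)
    (h21 : ∀ f : N₂ →ₗ[A] N₁, f = 0) :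
    hallNum A M N₁ N₂ = 1 :=
  hallNum_eq_one_of_no_homs_general A M N₁ N₂ hM h21
end

section
/- Let A be a finite ring and M, N, L finite A-modules. Then the number of submodules U ⊆ M with U ≅ L and M/U ≅ N equals |Ext^1_A(N,L)_M| · |Aut_A(M)| / (|Aut_A(N)| · |Aut_A(L)| · |Hom_A(N,L)|), where Ext^1_A(N,L)_M denotes the set of equivalence classes of extensions of N by L with middle term isomorphic to M. -/
/-- Short exact sequences `0 → L → M → N → 0` with middle term `M`. -/
def ExtPairs (A : Type*) [Ring A] (M N L : Type*)
    [AddCommGroup M] [Module A M] [AddCommGroup N] [Module A N]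
    [AddCommGroup L] [Module A L] : Type _ :=
  {p : (L →ₗ[A] M) × (M →ₗ[A] N) //
    Function.Injective p.1 ∧ Function.Surjective p.2 ∧
      LinearMap.range p.1 = LinearMap.ker p.2}

/-- Equivalence of extensions: an isomorphism of the middle terms commuting with
the maps from `L` and to `N`. -/
def ExtPairs.Equiv (A : Type*) [Ring A] (M N L : Type*)
    [AddCommGroup M] [Module A M] [AddCommGroup N] [Module A N]
    [AddCommGroup L] [Module A L]
    (p q : ExtPairs A M N L) : Prop :=
  ∃ φ : M ≃ₗ[A] M, (φ : M →ₗ[A] M) ∘ₗ p.1.1 = q.1.1 ∧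
    q.1.2 ∘ₗ (φ : M →ₗ[A] M) = p.1.2

/-- `Ext¹_A(N, L)_M`: equivalence classes of extensions of `N` by `L` whose middle
term is (isomorphic to) `M`. -/
def ExtClasses (A : Type*) [Ring A] (M N L : Type*)
    [AddCommGroup M] [Module A M] [AddCommGroup N] [Module A N]
    [AddCommGroup L] [Module A L] : Type _ :=
  Quot (ExtPairs.Equiv A M N L)

/-!
`Aut M` acts on the short exact sequences `0 → L → M → N → 0` with middle term `M`, and the
orbits are exactly the extension classes. The stabiliser of a sequence `(i, π)` consists of the
automorphisms `1 + i ∘ h ∘ π` with `h : N →ₗ L`, so every orbit has `|Aut M| / |Hom(N, L)|`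
elements. Counting the same sequences by the image `U = i(L)` instead, the sequences with a given
image are the pairs of isomorphisms `L ≃ U`, `M ⧸ U ≃ N`, i.e. a torsor under `Aut L × Aut N`.
-/

namespace LinearEquiv

variable {R M₁ M₂ N₁ N₂ : Type*} [Semiring R] [AddCommMonoid M₁] [AddCommMonoid M₂]
  [AddCommMonoid N₁] [AddCommMonoid N₂] [Module R M₁] [Module R M₂] [Module R N₁] [Module R N₂]

def equivCongr (e : M₁ ≃ₗ[R] M₂) (e' : N₁ ≃ₗ[R] N₂) : (M₁ ≃ₗ[R] N₁) ≃ (M₂ ≃ₗ[R] N₂) where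
  toFun f := e.symm.trans (f.trans e')
  invFun g := e.trans (g.trans e'.symm)
  left_inv f := by ext; simp
  right_inv g := by ext; simp

end LinearEquiv

namespace LinearMap

theorem exists_comp_eq_of_ker_le {R M N P : Type*} [Ring R] [AddCommGroup M] [AddCommGroup N]
    [AddCommGroup P] [Module R M] [Module R N] [Module R P] {f : M →ₗ[R] N}
    (hf : Function.Surjective f) {g : M →ₗ[R] P} (h : ker f ≤ ker g) :
    ∃ g' : N →ₗ[R] P, g' ∘ₗ f = g :=
  ⟨(ker f).liftQ g h ∘ₗ (f.quotKerEquivOfSurjective hf).symm.toLinearMap, by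
    ext m; simp [quotKerEquivOfSurjective_symm_apply]⟩

theorem exists_comp_eq_of_range_le {R M N P : Type*} [Semiring R] [AddCommMonoid M]
    [AddCommMonoid N] [AddCommMonoid P] [Module R M] [Module R N] [Module R P] {f : N →ₗ[R] M}
    (hf : Function.Injective f) {g : P →ₗ[R] M} (h : range g ≤ range f) :
    ∃ g' : P →ₗ[R] N, f ∘ₗ g' = g :=
  ⟨(LinearEquiv.ofInjective f hf).symm.toLinearMap ∘ₗ g.codRestrict (range f) fun x => h ⟨x, rfl⟩,
    by ext x; simp⟩

end LinearMap

theorem Nat.card_eq_card_mul_of_fiber_equiv {α β T : Type*} (f : α → β)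
    (e : ∀ b, {a // f a = b} ≃ T) : Nat.card α = Nat.card β * Nat.card T := by
  rw [← Nat.card_prod]
  exact Nat.card_congr <| (Equiv.sigmaFiberEquiv f).symm.trans <|
    (Equiv.sigmaCongrRight e).trans (Equiv.sigmaEquivProd β T)

namespace MulAction

theorem card_mul_card_eq_card_orbitRel_quotient_mul_card {G α S : Type*} [Group G]
    [MulAction G α] (e : ∀ a : α, stabilizer G a ≃ S) :
    Nat.card α * Nat.card S = Nat.card (orbitRel.Quotient G α) * Nat.card G := by
  rw [← Nat.card_prod, ← Nat.card_prod]
  apply Nat.card_congr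
  calc α × S ≃ (Σ ω : orbitRel.Quotient G α, G ⧸ stabilizer G ω.out) × S :=
        (selfEquivSigmaOrbitsQuotientStabilizer G α).prodCongr (Equiv.refl S)
    _ ≃ Σ ω : orbitRel.Quotient G α, (G ⧸ stabilizer G ω.out) × stabilizer G ω.out :=
        (Equiv.sigmaProdDistrib _ _).trans <|
          Equiv.sigmaCongrRight fun ω => (Equiv.refl _).prodCongr (e ω.out).symm
    _ ≃ Σ _ : orbitRel.Quotient G α, G :=
        Equiv.sigmaCongrRight fun _ => Subgroup.groupEquivQuotientProdSubgroup.symm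
    _ ≃ orbitRel.Quotient G α × G := Equiv.sigmaEquivProd _ _

end MulAction

section

variable (A : Type*) [Ring A] (M N L : Type*) [AddCommGroup M] [Module A M] [AddCommGroup N]
  [Module A N] [AddCommGroup L] [Module A L]

abbrev HallSubmodule : Type _ :=
  {U : Submodule A M // Nonempty (U ≃ₗ[A] L) ∧ Nonempty ((M ⧸ U) ≃ₗ[A] N)}

end

namespace ExtPairs

variable {A : Type*} [Ring A] {M N L : Type*} [AddCommGroup M] [Module A M] [AddCommGroup N]
  [Module A N] [AddCommGroup L] [Module A L]

abbrev incl (p : ExtPairs A M N L) : L →ₗ[A] M := p.1.1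

abbrev proj (p : ExtPairs A M N L) : M →ₗ[A] N := p.1.2

theorem ext {p q : ExtPairs A M N L} (h₁ : p.incl = q.incl) (h₂ : p.proj = q.proj) : p = q :=
  Subtype.ext (Prod.ext h₁ h₂)

variable (p : ExtPairs A M N L)

theorem incl_injective : Function.Injective p.incl := p.2.1

theorem proj_surjective : Function.Surjective p.proj := p.2.2.1

theorem range_incl : LinearMap.range p.incl = LinearMap.ker p.proj := p.2.2.2

@[simp]
theorem proj_incl (l : L) : p.proj (p.incl l) = 0 :=
  LinearMap.mem_ker.mp <| p.range_incl ▸ LinearMap.mem_range_self p.incl l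

instance : MulAction (M ≃ₗ[A] M) (ExtPairs A M N L) where
  smul φ p := ⟨(φ.toLinearMap ∘ₗ p.incl, p.proj ∘ₗ φ.symm.toLinearMap),
    φ.injective.comp p.incl_injective, p.proj_surjective.comp φ.symm.surjective, by
      rw [LinearMap.range_comp, LinearMap.ker_comp, p.range_incl]
      exact Submodule.map_equiv_eq_comap_symm φ _⟩
  one_smul _ := rfl
  mul_smul _ _ _ := rfl

@[simp]
theorem smul_incl (φ : M ≃ₗ[A] M) : (φ • p).incl = φ.toLinearMap ∘ₗ p.incl := rfl

@[simp]
theorem smul_proj (φ : M ≃ₗ[A] M) : (φ • p).proj = p.proj ∘ₗ φ.symm.toLinearMap := rfl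

theorem equiv_iff_exists_smul (q : ExtPairs A M N L) :
    ExtPairs.Equiv A M N L p q ↔ ∃ φ : M ≃ₗ[A] M, φ • p = q := by
  refine exists_congr fun φ => ⟨fun ⟨h₁, h₂⟩ => ext h₁ ?_, fun h => ⟨h ▸ rfl, h ▸ ?_⟩⟩
  · ext m; simpa using congr($h₂ (φ.symm m)).symm
  · ext; simp

variable (A M N L) in
def extClassesEquivOrbits :
    ExtClasses A M N L ≃ MulAction.orbitRel.Quotient (M ≃ₗ[A] M) (ExtPairs A M N L) :=
  Quot.congrRight fun p q => by
    rw [equiv_iff_exists_smul, MulAction.orbitRel_apply, MulAction.mem_orbit_symm]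
    rfl

theorem exists_incl_comp_comp_proj_eq {f : M →ₗ[A] M} (hfi : f ∘ₗ p.incl = 0)
    (hpf : p.proj ∘ₗ f = 0) : ∃ h : N →ₗ[A] L, p.incl ∘ₗ h ∘ₗ p.proj = f := by
  obtain ⟨g, rfl⟩ := LinearMap.exists_comp_eq_of_ker_le p.proj_surjective (g := f) <| by
    rw [← p.range_incl]
    rintro _ ⟨l, rfl⟩
    exact congr($hfi l)
  obtain ⟨h, rfl⟩ := LinearMap.exists_comp_eq_of_range_le p.incl_injective (g := g) <| by
    rw [p.range_incl]
    rintro _ ⟨n, rfl⟩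
    obtain ⟨m, rfl⟩ := p.proj_surjective n
    exact congr($hpf m)
  exact ⟨h, rfl⟩

def autOfHom (h : N →ₗ[A] L) : M ≃ₗ[A] M :=
  .ofLinearMap (LinearMap.id + p.incl ∘ₗ h ∘ₗ p.proj) (LinearMap.id - p.incl ∘ₗ h ∘ₗ p.proj)
    (by ext; simp) (by ext; simp)

theorem autOfHom_smul (h : N →ₗ[A] L) : p.autOfHom h • p = p :=
  ext (by ext; simp [autOfHom]) (by ext; simp [autOfHom])

theorem autOfHom_injective : Function.Injective p.autOfHom := by
  intro h h' hh
  ext n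
  obtain ⟨m, rfl⟩ := p.proj_surjective n
  apply p.incl_injective
  simpa [autOfHom] using congr($hh m)

theorem exists_autOfHom_eq {φ : M ≃ₗ[A] M} (hφ : φ • p = p) : ∃ h, p.autOfHom h = φ := by
  have hi : φ.toLinearMap ∘ₗ p.incl = p.incl := congrArg incl hφ
  have hπ : p.proj ∘ₗ φ.toLinearMap = p.proj := by
    ext m
    simpa using congr($(congrArg proj hφ) (φ m)).symm
  obtain ⟨h, hh⟩ := p.exists_incl_comp_comp_proj_eq (f := φ.toLinearMap - LinearMap.id)
    (by rw [LinearMap.sub_comp, hi, LinearMap.id_comp, sub_self])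
    (by rw [LinearMap.comp_sub, hπ, LinearMap.comp_id, sub_self])
  refine ⟨h, LinearEquiv.toLinearMap_injective ?_⟩
  change LinearMap.id + p.incl ∘ₗ h ∘ₗ p.proj = φ.toLinearMap
  rw [hh, add_sub_cancel]

noncomputable def stabilizerEquivHom : MulAction.stabilizer (M ≃ₗ[A] M) p ≃ (N →ₗ[A] L) :=
  (Equiv.ofBijective (fun h => ⟨p.autOfHom h, p.autOfHom_smul h⟩)
    ⟨fun _ _ hh => p.autOfHom_injective (congrArg Subtype.val hh),
      fun φ => (p.exists_autOfHom_eq φ.2).imp fun _ hh => Subtype.ext hh⟩).symm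

theorem card_mul_card_hom :
    Nat.card (ExtPairs A M N L) * Nat.card (N →ₗ[A] L) =
      Nat.card (ExtClasses A M N L) * Nat.card (M ≃ₗ[A] M) := by
  rw [Nat.card_congr (extClassesEquivOrbits A M N L)]
  exact MulAction.card_mul_card_eq_card_orbitRel_quotient_mul_card stabilizerEquivHom

def ofEquivs {U : Submodule A M} (e : L ≃ₗ[A] U) (f : (M ⧸ U) ≃ₗ[A] N) : ExtPairs A M N L :=
  ⟨(U.subtype ∘ₗ e.toLinearMap, f.toLinearMap ∘ₗ U.mkQ),
    U.injective_subtype.comp e.injective, f.surjective.comp U.mkQ_surjective, by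
      rw [LinearMap.range_comp, LinearMap.ker_comp, LinearEquiv.range, Submodule.map_subtype_top,
        LinearEquiv.ker, Submodule.comap_bot, Submodule.ker_mkQ]⟩

section ofEquivs

variable {U : Submodule A M} (e : L ≃ₗ[A] U) (f : (M ⧸ U) ≃ₗ[A] N)

@[simp]
theorem incl_ofEquivs : (ofEquivs e f).incl = U.subtype ∘ₗ e.toLinearMap := rfl

@[simp]
theorem proj_ofEquivs : (ofEquivs e f).proj = f.toLinearMap ∘ₗ U.mkQ := rfl

theorem range_incl_ofEquivs : LinearMap.range (ofEquivs e f).incl = U := by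
  rw [incl_ofEquivs, LinearMap.range_comp, LinearEquiv.range, Submodule.map_subtype_top]

end ofEquivs

noncomputable def fiberRangeInclEquiv (U : Submodule A M) :
    {p : ExtPairs A M N L // LinearMap.range p.incl = U} ≃ (L ≃ₗ[A] U) × ((M ⧸ U) ≃ₗ[A] N) where
  toFun p := ((LinearEquiv.ofInjective _ p.1.incl_injective).trans (.ofEq _ _ p.2),
    (Submodule.quotEquivOfEq _ _ (p.2.symm.trans p.1.range_incl)).trans
      (p.1.proj.quotKerEquivOfSurjective p.1.proj_surjective))
  invFun ef := ⟨ofEquivs ef.1 ef.2, range_incl_ofEquivs ef.1 ef.2⟩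
  left_inv p := Subtype.ext (ext (by ext; simp) (by ext; simp))
  right_inv _ := Prod.ext (by ext; rfl) (LinearEquiv.toLinearMap_injective (by ext; rfl))

noncomputable def toHallSubmodule (p : ExtPairs A M N L) : HallSubmodule A M N L :=
  let ef := fiberRangeInclEquiv _ ⟨p, rfl⟩
  ⟨LinearMap.range p.incl, ⟨ef.1.symm⟩, ⟨ef.2⟩⟩

theorem card_eq_hallNum_mul :
    Nat.card (ExtPairs A M N L) =
      hallNum A M N L * (Nat.card (L ≃ₗ[A] L) * Nat.card (N ≃ₗ[A] N)) := by
  rw [← Nat.card_prod]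
  exact Nat.card_eq_card_mul_of_fiber_equiv toHallSubmodule fun U =>
    (Equiv.subtypeEquivRight fun p => Subtype.ext_iff).trans <|
      (fiberRangeInclEquiv U.1).trans <|
        (LinearEquiv.equivCongr (.refl A L) U.2.1.some).prodCongr
          (LinearEquiv.equivCongr U.2.2.some (.refl A N))

end ExtPairs

theorem riedtmann_formula_general
    (A : Type*) [Ring A]
    (M N L : Type*)
    [AddCommGroup M] [Module A M]
    [AddCommGroup N] [Module A N]
    [AddCommGroup L] [Module A L] :
    hallNum A M N L *
      (Nat.card (N ≃ₗ[A] N) * Nat.card (L ≃ₗ[A] L) * Nat.card (N →ₗ[A] L)) =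
    Nat.card (ExtClasses A M N L) * Nat.card (M ≃ₗ[A] M) := by
  rw [← ExtPairs.card_mul_card_hom, ExtPairs.card_eq_hallNum_mul]
  ring

/-- Riedtmann's formula:
`G^M_{NL} = |Ext¹_A(N,L)_M| ⬝ |Aut M| / (|Aut N| ⬝ |Aut L| ⬝ |Hom(N,L)|)`,
stated multiplicatively. -/
theorem riedtmann_formula
    (A : Type*) [Ring A] [Finite A]
    (M N L : Type*)
    [AddCommGroup M] [Module A M] [Finite M]
    [AddCommGroup N] [Module A N] [Finite N]
    [AddCommGroup L] [Module A L] [Finite L] :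
    hallNum A M N L *
      (Nat.card (N ≃ₗ[A] N) * Nat.card (L ≃ₗ[A] L) * Nat.card (N →ₗ[A] L)) =
    Nat.card (ExtClasses A M N L) * Nat.card (M ≃ₗ[A] M) :=
  riedtmann_formula_general A M N L
end

section
/- Let q be a prime power, k a field with q elements, A a finite-dimensional k-algebra, and X, Y non-isomorphic indecomposable finite-dimensional A-modules, M = X ⊕ Y. Then q − 1 divides G^M_{XY} − 1, where G^M_{XY} counts submodules L ⊆ M with L ≅ Y and M/L ≅ X. -/
/-- A module is indecomposable if it is nonzero and admits no nontrivial
direct sum decomposition. -/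
def IsIndecomposableModule (A : Type*) [Ring A] (M : Type*)
    [AddCommGroup M] [Module A M] : Prop :=
  Nontrivial M ∧ ∀ U V : Submodule A M, IsCompl U V → U = ⊥ ∨ V = ⊥

open MulAction in
theorem MulAction.card_group_dvd_card_sub_one {G S : Type*} [Group G] [Finite G] [Finite S]
    [MulAction G S] (s₀ : S) (hfix : ∀ g : G, g • s₀ = s₀)
    (hfree : ∀ g : G, g ≠ 1 → ∀ s : S, g • s = s → s = s₀) :
    (Nat.card G : ℤ) ∣ Nat.card S - 1 := by
  classical
  have := Fintype.ofFinite G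
  have := Fintype.ofFinite S
  have := Fintype.ofFinite (orbitRel.Quotient G S)
  have hburnside := sum_card_fixedBy_eq_card_orbits_mul_card_group G S
  simp only [← Nat.card_eq_fintype_card] at hburnside
  have hone : ∀ g ∈ Finset.univ.erase (1 : G), Nat.card (fixedBy S g) = 1 := fun g hg => by
    have hg1 : fixedBy S g = {s₀} := Set.eq_singleton_iff_unique_mem.mpr
      ⟨hfix g, hfree g (Finset.ne_of_mem_erase hg)⟩
    rw [hg1, Nat.card_unique]
  rw [← Finset.add_sum_erase _ _ (Finset.mem_univ 1), Finset.sum_congr rfl hone,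
    Finset.sum_const, Finset.card_erase_of_mem (Finset.mem_univ 1), smul_eq_mul, mul_one,
    Finset.card_univ, ← Nat.card_eq_fintype_card, fixedBy_one_eq_univ, Nat.card_univ] at hburnside
  have hG : 1 ≤ Nat.card G := Nat.card_pos
  exact ⟨Nat.card (orbitRel.Quotient G S) - 1, by grind⟩

section Products

variable {A : Type*} [Ring A] {X Y : Type*} [AddCommGroup X] [Module A X]
  [AddCommGroup Y] [Module A Y]

theorem IsIndecomposableModule.subsingleton_or_of_equiv_prod {W : Type*} [AddCommGroup W]
    [Module A W] (hW : IsIndecomposableModule A W) (e : (X × Y) ≃ₗ[A] W) :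
    Subsingleton X ∨ Subsingleton Y := by
  have hcompl := (Submodule.orderIsoMapComap e).isCompl LinearMap.isCompl_range_inl_inr
  refine (hW.2 _ _ hcompl).imp (fun h => ?_) (fun h => ?_)
  · rw [Submodule.orderIsoMapComap_apply, Submodule.map_eq_bot_iff, LinearMap.range_eq_bot] at h
    exact ⟨fun a b => LinearMap.inl_injective <|
      (LinearMap.congr_fun h a).trans (LinearMap.congr_fun h b).symm⟩
  · rw [Submodule.orderIsoMapComap_apply, Submodule.map_eq_bot_iff, LinearMap.range_eq_bot] at h
    exact ⟨fun a b => LinearMap.inr_injective <|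
      (LinearMap.congr_fun h a).trans (LinearMap.congr_fun h b).symm⟩

def Submodule.prodEquivProd (U : Submodule A X) (V : Submodule A Y) :
    U.prod V ≃ₗ[A] U × V where
  toFun p := (⟨p.1.1, (Submodule.mem_prod.mp p.2).1⟩,
    ⟨p.1.2, (Submodule.mem_prod.mp p.2).2⟩)
  map_add' _ _ := rfl
  map_smul' _ _ := rfl
  invFun uv := ⟨(uv.1.1, uv.2.1), Submodule.mem_prod.mpr ⟨uv.1.2, uv.2.2⟩⟩

noncomputable def Submodule.quotientProdEquiv (U : Submodule A X) (V : Submodule A Y) :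
    ((X × Y) ⧸ U.prod V) ≃ₗ[A] (X ⧸ U) × (Y ⧸ V) :=
  Submodule.quotEquivOfEq _ _ (by rw [LinearMap.ker_prodMap, Submodule.ker_mkQ, Submodule.ker_mkQ])
    ≪≫ₗ (U.mkQ.prodMap V.mkQ).quotKerEquivOfSurjective
      (Prod.map_surjective.mpr ⟨U.mkQ_surjective, V.mkQ_surjective⟩)

theorem Submodule.eq_prod_comap_inl_comap_inr {L : Submodule A (X × Y)}
    (h : ∀ p ∈ L, ((0 : X), p.2) ∈ L) :
    L = (L.comap (LinearMap.inl A X Y)).prod (L.comap (LinearMap.inr A X Y)) := by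
  ext ⟨x, y⟩
  simp only [Submodule.mem_prod, Submodule.mem_comap, LinearMap.inl_apply, LinearMap.inr_apply]
  refine ⟨fun hp => ⟨?_, h _ hp⟩, fun ⟨hx, hy⟩ => by simpa using add_mem hx hy⟩
  simpa using sub_mem hp (h _ hp)

theorem eq_bot_and_eq_top_of_prod_equiv (hX : IsIndecomposableModule A X)
    (hY : IsIndecomposableModule A Y) (hXY : ¬ Nonempty (X ≃ₗ[A] Y))
    {U : Submodule A X} {V : Submodule A Y} (e : U.prod V ≃ₗ[A] Y)
    (f : ((X × Y) ⧸ U.prod V) ≃ₗ[A] X) : U = ⊥ ∧ V = ⊤ := by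
  have := hX.1
  have := hY.1
  have hsub := hY.subsingleton_or_of_equiv_prod ((U.prodEquivProd V).symm ≪≫ₗ e)
  have hquot := hX.subsingleton_or_of_equiv_prod ((U.quotientProdEquiv V).symm ≪≫ₗ f)
  simp only [Submodule.subsingleton_iff_eq_bot, Submodule.Quotient.subsingleton_iff] at hsub hquot
  rcases hsub with hU | hV <;> rcases hquot with hU' | hV'
  · exact absurd (hU ▸ hU') bot_ne_top
  · exact ⟨hU, hV'⟩
  · subst hU' hV
    exact (hXY ⟨Submodule.topEquiv.symm ≪≫ₗ LinearEquiv.prodUnique.symm ≪≫ₗ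
      (Submodule.prodEquivProd ⊤ ⊥).symm ≪≫ₗ e⟩).elim
  · exact absurd (hV ▸ hV') bot_ne_top

end Products

open scoped Pointwise

def hallSubmodules (A : Type*) [Ring A] (M N L : Type*) [AddCommGroup M] [Module A M]
    [AddCommGroup N] [Module A N] [AddCommGroup L] [Module A L] :
    SubMulAction (M ≃ₗ[A] M) (Submodule A M) where
  carrier := {U | Nonempty (U ≃ₗ[A] L) ∧ Nonempty ((M ⧸ U) ≃ₗ[A] N)}
  smul_mem' e U := fun ⟨⟨f⟩, ⟨g⟩⟩ =>
    ⟨⟨(e.submoduleMap U).symm ≪≫ₗ f⟩,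
      ⟨(Submodule.Quotient.equiv U _ e rfl).symm ≪≫ₗ g⟩⟩

theorem hallNum_eq_card_hallSubmodules (A : Type*) [Ring A] (M N L : Type*) [AddCommGroup M]
    [Module A M] [AddCommGroup N] [Module A N] [AddCommGroup L] [Module A L] :
    hallNum A M N L = Nat.card (hallSubmodules A M N L) :=
  rfl

section ScaleSnd

variable {k : Type*} [Field k] {A : Type*} [Ring A] [Algebra k A] {X Y : Type*}
  [AddCommGroup X] [Module A X] [AddCommGroup Y] [Module k Y] [Module A Y] [IsScalarTower k A Y]

variable (A X Y) in
def scaleSnd : kˣ →* ((X × Y) ≃ₗ[A] (X × Y)) where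
  toFun c := (LinearEquiv.refl A X).prodCongr (DistribMulAction.toLinearEquiv A Y c)
  map_one' := by ext <;> simp
  map_mul' c d := by ext <;> simp [mul_smul]

theorem scaleSnd_apply (c : kˣ) (p : X × Y) : scaleSnd A X Y c p = (p.1, c • p.2) := rfl

theorem scaleSnd_smul_snd (c : kˣ) :
    scaleSnd A X Y c • Submodule.snd A X Y = Submodule.snd A X Y := by
  ext ⟨x, y⟩
  simp only [Submodule.mem_smul_pointwise_iff_exists, Submodule.snd, Submodule.mem_comap,
    Submodule.mem_bot, LinearMap.fst_apply, Prod.exists, LinearEquiv.smul_def, scaleSnd_apply,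
    Prod.mk.injEq]
  exact ⟨fun ⟨_, _, h0, h, _⟩ => h ▸ h0,
    fun hx => ⟨0, c⁻¹ • y, rfl, hx.symm, smul_inv_smul c y⟩⟩

theorem mem_of_scaleSnd_smul_eq {c : kˣ} (hc : c ≠ 1) {L : Submodule A (X × Y)}
    (hL : scaleSnd A X Y c • L = L) {p : X × Y} (hp : p ∈ L) : ((0 : X), p.2) ∈ L := by
  obtain ⟨x, y⟩ := p
  have hcy : (x, (c : k) • y) ∈ L := hL ▸ Submodule.smul_mem_pointwise_smul _ _ L hp
  have hsub : ((0 : X), ((c : k) - 1) • y) ∈ L := by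
    simpa [sub_smul] using sub_mem hcy hp
  have hc' : (c : k) - 1 ≠ 0 := sub_ne_zero.mpr (Units.val_eq_one.not.mpr hc)
  simpa [smul_smul, inv_mul_cancel₀ hc'] using L.smul_mem (algebraMap k A ((c : k) - 1)⁻¹) hsub

end ScaleSnd

section HallSet

variable {k : Type*} [Field k] {A : Type*} [Ring A] [Algebra k A] {X Y : Type*}
  [AddCommGroup X] [Module A X] [AddCommGroup Y] [Module k Y] [Module A Y] [IsScalarTower k A Y]

theorem snd_mem_hallSubmodules : Submodule.snd A X Y ∈ hallSubmodules A (X × Y) X Y :=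
  ⟨⟨Submodule.sndEquiv A X Y⟩,
    ⟨(LinearMap.fst A X Y).quotKerEquivOfSurjective LinearMap.fst_surjective⟩⟩

theorem eq_snd_of_scaleSnd_smul_eq (hX : IsIndecomposableModule A X)
    (hY : IsIndecomposableModule A Y) (hXY : ¬ Nonempty (X ≃ₗ[A] Y)) {c : kˣ} (hc : c ≠ 1)
    {L : Submodule A (X × Y)} (hL : L ∈ hallSubmodules A (X × Y) X Y)
    (hfix : scaleSnd A X Y c • L = L) : L = Submodule.snd A X Y := by
  have hLprod := Submodule.eq_prod_comap_inl_comap_inr fun _ hp =>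
    mem_of_scaleSnd_smul_eq hc hfix hp
  obtain ⟨⟨e⟩, ⟨f⟩⟩ := hL
  rw [hLprod] at e f
  obtain ⟨hU, hV⟩ := eq_bot_and_eq_top_of_prod_equiv hX hY hXY e f
  rw [hLprod, hU, hV, ← Submodule.comap_fst]
  rfl

end HallSet

theorem sub_one_dvd_hallNum_split_sub_one_general
    (q : ℕ) (k : Type) [Field k] [Finite k] (hq : Nat.card k = q)
    (A : Type) [Ring A] [Algebra k A]
    (X Y : Type)
    [AddCommGroup X] [Module k X] [Module A X] [Module.Finite k X]
    [AddCommGroup Y] [Module k Y] [Module A Y] [IsScalarTower k A Y] [Module.Finite k Y]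
    (hX : IsIndecomposableModule A X) (hY : IsIndecomposableModule A Y)
    (hXY : ¬ Nonempty (X ≃ₗ[A] Y)) :
    ((q : ℤ) - 1) ∣ (hallNum A (X × Y) X Y : ℤ) - 1 := by
  have : Finite X := Module.finite_of_finite k
  have : Finite Y := Module.finite_of_finite k
  let _ := MulAction.compHom (hallSubmodules A (X × Y) X Y) (scaleSnd A X Y (k := k))
  have hdvd := MulAction.card_group_dvd_card_sub_one (G := kˣ) ⟨_, snd_mem_hallSubmodules⟩
    (fun c => Subtype.ext (scaleSnd_smul_snd c))
    (fun c hc L hL =>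
      Subtype.ext (eq_snd_of_scaleSnd_smul_eq hX hY hXY hc L.2 (congrArg Subtype.val hL)))
  rwa [Nat.card_units, hq, Nat.cast_sub (hq ▸ Nat.card_pos), Nat.cast_one,
    ← hallNum_eq_card_hallSubmodules] at hdvd

/-- Lemma 5.1(2), case `X ≇ Y`: over a finite field `k` with `q` elements, for
non-isomorphic indecomposables `X`, `Y` and `M = X ⊕ Y`, one has
`q − 1 ∣ G^{X⊕Y}_{XY} − 1`. -/
theorem sub_one_dvd_hallNum_split_sub_one
    (q : ℕ) (k : Type) [Field k] [Finite k] (hq : Nat.card k = q)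
    (A : Type) [Ring A] [Algebra k A] [Module.Finite k A]
    (X Y : Type)
    [AddCommGroup X] [Module k X] [Module A X] [IsScalarTower k A X] [Module.Finite k X]
    [AddCommGroup Y] [Module k Y] [Module A Y] [IsScalarTower k A Y] [Module.Finite k Y]
    (hX : IsIndecomposableModule A X) (hY : IsIndecomposableModule A Y)
    (hXY : ¬ Nonempty (X ≃ₗ[A] Y)) :
    ((q : ℤ) - 1) ∣ (hallNum A (X × Y) X Y : ℤ) - 1 :=
  sub_one_dvd_hallNum_split_sub_one_general q k hq A X Y hX hY hXY
end

section
/- Let q be a prime power, k a field with q elements, A a finite-dimensional k-algebra, and X an indecomposable finite-dimensional A-module, M = X ⊕ X. Then q − 1 divides G^M_{XX} − 2, where G^M_{XX} counts submodules L ⊆ M with L ≅ X and M/L ≅ X. -/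
/-!
The group `kˣ` acts on the submodules `L ⊆ X × X` with `L ≅ X ≅ (X × X)/L` through the
automorphisms `(x, y) ↦ (c • x, y)`. A submodule fixed by some `c ≠ 1` is stable under the
projection `(x, y) ↦ (x, 0)`, so by indecomposability of `L ≅ X` it lies in, and by counting
equals, `X × 0` or `0 × X`. Every other orbit is therefore free, of size `q - 1`, and the
count is `2` modulo `q - 1`.
-/

theorem MulAction.card_modEq_card_of_free_on_compl {G α : Type*} [Group G] [MulAction G α]
    [Finite α] (F : Set α) (hF : F ⊆ fixedPoints G α)
    (hfree : ∀ a ∉ F, ∀ g : G, g • a = a → g = 1) :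
    Nat.card α ≡ Nat.card F [MOD Nat.card G] := by
  classical
  let C : SubMulAction G α :=
    { carrier := Fᶜ
      smul_mem' g a ha hga := ha (by rwa [← inv_smul_smul g a, hF hga g⁻¹]) }
  have hC : ∀ b : C, stabilizer G b = ⊥ := fun b => by
    refine (Subgroup.eq_bot_iff_forall _).2 fun g hg => hfree b b.2 g ?_
    rw [SubMulAction.stabilizer_of_subMul] at hg
    exact hg
  have hdvd : Nat.card G ∣ Nat.card C := by
    rw [Nat.card_congr (selfEquivOrbitsQuotientProd hC), Nat.card_prod]
    exact dvd_mul_left _ _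
  calc Nat.card α = Nat.card F + Nat.card C := by
        rw [← Nat.card_sum]; exact Nat.card_congr (Equiv.sumCompl (· ∈ F)).symm
    _ ≡ Nat.card F + 0 [MOD Nat.card G] := (Nat.modEq_zero_iff_dvd.2 hdvd).add_left _

open LinearMap

section Indecomposable

variable {A M N : Type*} [Ring A] [AddCommGroup M] [Module A M] [AddCommGroup N] [Module A N]

theorem IsIndecomposableModule.of_linearEquiv (e : M ≃ₗ[A] N) (h : IsIndecomposableModule A N) :
    IsIndecomposableModule A M := by
  have := h.1
  exact ⟨e.toEquiv.nontrivial, fun U V hUV =>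
    (h.2 _ _ ((Submodule.orderIsoMapComap e).isCompl hUV)).imp
      Submodule.map_eq_bot_iff.1 Submodule.map_eq_bot_iff.1⟩

theorem IsIndecomposableModule.eq_zero_or_eq_one_of_isIdempotentElem
    (h : IsIndecomposableModule A M) {f : Module.End A M} (hf : IsIdempotentElem f) :
    f = 0 ∨ f = 1 := by
  refine (h.2 _ _ hf.isCompl).imp range_eq_bot.1 fun hker => ?_
  exact LinearMap.ext fun x => ker_eq_bot.1 hker (LinearMap.congr_fun hf x)

end Indecomposable

theorem Submodule.eq_range_of_le_of_linearEquiv {A M N : Type*} [Ring A] [AddCommGroup M]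
    [Module A M] [AddCommGroup N] [Module A N] [Finite M] {f : N →ₗ[A] M}
    (hf : Function.Injective f) {U : Submodule A M} (e : U ≃ₗ[A] N) (hle : U ≤ range f) :
    U = range f :=
  toAddSubgroup_injective <| AddSubgroup.eq_of_le_of_card_ge hle <|
    ((Nat.card_congr (LinearEquiv.ofInjective f hf).toEquiv).symm.trans
      (Nat.card_congr e.toEquiv).symm).le

open scoped Pointwise

def hallSubMulAction (A : Type*) [Ring A] (M N L : Type*) [AddCommGroup M] [Module A M]
    [AddCommGroup N] [Module A N] [AddCommGroup L] [Module A L] :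
    SubMulAction (M ≃ₗ[A] M) (Submodule A M) where
  carrier := {U | Nonempty (U ≃ₗ[A] L) ∧ Nonempty ((M ⧸ U) ≃ₗ[A] N)}
  smul_mem' e U := fun ⟨⟨f⟩, ⟨g⟩⟩ =>
    ⟨⟨(e.submoduleMap U).symm.trans f⟩,
      ⟨(Submodule.Quotient.equiv U _ e rfl).symm.trans g⟩⟩

theorem nat_card_hallSubMulAction (A : Type*) [Ring A] (M N L : Type*) [AddCommGroup M]
    [Module A M] [AddCommGroup N] [Module A N] [AddCommGroup L] [Module A L] :
    Nat.card (hallSubMulAction A M N L) = hallNum A M N L := rfl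

section Prod

variable {A M N : Type*} [Ring A] [AddCommGroup M] [Module A M] [AddCommGroup N] [Module A N]

theorem range_inl_mem_hallSubMulAction : range (inl A M N) ∈ hallSubMulAction A (M × N) N M :=
  ⟨⟨(LinearEquiv.ofInjective _ inl_injective).symm⟩,
    ⟨(Submodule.quotientEquivOfIsCompl _ _ isCompl_range_inl_inr).trans
      (LinearEquiv.ofInjective _ inr_injective).symm⟩⟩

theorem range_inr_mem_hallSubMulAction : range (inr A M N) ∈ hallSubMulAction A (M × N) M N :=
  ⟨⟨(LinearEquiv.ofInjective _ inr_injective).symm⟩,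
    ⟨(Submodule.quotientEquivOfIsCompl _ _ isCompl_range_inl_inr.symm).trans
      (LinearEquiv.ofInjective _ inl_injective).symm⟩⟩

theorem range_inl_ne_range_inr [Nontrivial M] : range (inl A M N) ≠ range (inr A M N) := by
  obtain ⟨x, hx⟩ := exists_ne (0 : M)
  intro h
  have hmem : (x, (0 : N)) ∈ range (inr A M N) := h ▸ ⟨x, rfl⟩
  exact hx (by simpa [range_inr] using hmem)

end Prod

section SplitSquare

variable {A X : Type*} [Ring A] [AddCommGroup X] [Module A X]

theorem eq_range_inl_or_eq_range_inr_of_fst_mem [Finite X] (hX : IsIndecomposableModule A X)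
    {U : Submodule A (X × X)} (e : U ≃ₗ[A] X) (hU : ∀ p ∈ U, (p.1, (0 : X)) ∈ U) :
    U = range (inl A X X) ∨ U = range (inr A X X) := by
  let π : Module.End A U := (inl A X X ∘ₗ fst A X X).restrict hU
  have hπ : IsIdempotentElem π := LinearMap.ext fun _ => rfl
  rcases (hX.of_linearEquiv e).eq_zero_or_eq_one_of_isIdempotentElem hπ with h | h
  · refine Or.inr (U.eq_range_of_le_of_linearEquiv inr_injective e fun p hp => ?_)
    rw [range_inr, mem_ker]
    exact congr_arg (fun u : U => (u : X × X).1) (LinearMap.congr_fun h ⟨p, hp⟩)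
  · refine Or.inl (U.eq_range_of_le_of_linearEquiv inl_injective e fun p hp => ?_)
    rw [range_inl, mem_ker]
    exact (congr_arg (fun u : U => (u : X × X).2) (LinearMap.congr_fun h ⟨p, hp⟩)).symm

end SplitSquare

section ScaleFst

variable {k A X : Type*} [Field k] [Ring A] [Algebra k A] [AddCommGroup X] [Module k X]
  [Module A X] [IsScalarTower k A X]

variable (A X) in
def scaleFst : kˣ →* (X × X) ≃ₗ[A] (X × X) where
  toFun c := (DistribMulAction.toLinearEquiv A X c).prodCongr (LinearEquiv.refl A X)
  map_one' := by ext <;> simp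
  map_mul' c d := by ext <;> simp [mul_smul]

theorem scaleFst_apply (c : kˣ) (p : X × X) : scaleFst A X c p = ((c : k) • p.1, p.2) := rfl

theorem fst_mem_of_scaleFst_smul_eq {c : kˣ} (hc : c ≠ 1) {U : Submodule A (X × X)}
    (hU : scaleFst A X c • U = U) {p : X × X} (hp : p ∈ U) : (p.1, (0 : X)) ∈ U := by
  have hcp : scaleFst A X c p ∈ U := hU ▸ Submodule.smul_mem_pointwise_smul p _ U hp
  have hc' : (c : k) - 1 ≠ 0 := sub_ne_zero.2 (Units.val_injective.ne hc)
  -- `(p.1, 0) = (c - 1)⁻¹ • (scaleFst c p - p)`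
  convert U.smul_of_tower_mem ((c : k) - 1)⁻¹ (U.sub_mem hcp hp) using 1
  ext
  · simp [scaleFst_apply, eq_inv_smul_iff₀ hc', sub_smul]
  · simp [scaleFst_apply]

theorem scaleFst_smul_range_inl (c : kˣ) :
    scaleFst A X c • range (inl A X X) = range (inl A X X) := by
  ext p
  rw [← SetLike.mem_coe, Submodule.coe_pointwise_smul, Set.mem_smul_set_iff_inv_smul_mem,
    ← map_inv, LinearEquiv.smul_def, SetLike.mem_coe, scaleFst_apply]
  simp [range_inl]

theorem scaleFst_smul_range_inr (c : kˣ) :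
    scaleFst A X c • range (inr A X X) = range (inr A X X) := by
  ext p
  rw [← SetLike.mem_coe, Submodule.coe_pointwise_smul, Set.mem_smul_set_iff_inv_smul_mem,
    ← map_inv, LinearEquiv.smul_def, SetLike.mem_coe, scaleFst_apply]
  simp [range_inr]

theorem eq_range_inl_or_eq_range_inr_of_scaleFst_smul_eq [Finite X]
    (hX : IsIndecomposableModule A X) {c : kˣ} (hc : c ≠ 1) {U : Submodule A (X × X)}
    (e : U ≃ₗ[A] X) (hU : scaleFst A X c • U = U) :
    U = range (inl A X X) ∨ U = range (inr A X X) :=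
  eq_range_inl_or_eq_range_inr_of_fst_mem hX e fun _ hp => fst_mem_of_scaleFst_smul_eq hc hU hp

end ScaleFst

theorem sub_one_dvd_hallNum_split_sub_two_general
    (q : ℕ) (k : Type) [Field k] [Finite k] (hq : Nat.card k = q)
    (A : Type) [Ring A] [Algebra k A]
    (X : Type)
    [AddCommGroup X] [Module k X] [Module A X] [IsScalarTower k A X] [Module.Finite k X]
    (hX : IsIndecomposableModule A X) :
    ((q : ℤ) - 1) ∣ (hallNum A (X × X) X X : ℤ) - 2 := by
  have : Finite X := Module.finite_of_finite k
  have : Nontrivial X := hX.1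
  let : MulAction kˣ (hallSubMulAction A (X × X) X X) := MulAction.compHom _ (scaleFst A X)
  let v₁ : hallSubMulAction A (X × X) X X := ⟨_, range_inl_mem_hallSubMulAction⟩
  let v₂ : hallSubMulAction A (X × X) X X := ⟨_, range_inr_mem_hallSubMulAction⟩
  have hfixed : {v₁, v₂} ⊆ MulAction.fixedPoints kˣ (hallSubMulAction A (X × X) X X) := by
    rintro v (rfl | rfl) c
    exacts [Subtype.ext (scaleFst_smul_range_inl c), Subtype.ext (scaleFst_smul_range_inr c)]
  have hfree : ∀ v ∉ ({v₁, v₂} : Set _), ∀ c : kˣ, c • v = v → c = 1 := by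
    intro v hv c hcv
    by_contra hc
    obtain ⟨⟨e⟩, -⟩ := v.2
    exact hv ((eq_range_inl_or_eq_range_inr_of_scaleFst_smul_eq hX hc e
      (congr_arg Subtype.val hcv)).imp (fun h => Subtype.ext h) (fun h => Subtype.ext h))
  have hv : v₁ ≠ v₂ := fun h => range_inl_ne_range_inr (congr_arg Subtype.val h)
  have hmod := MulAction.card_modEq_card_of_free_on_compl _ hfixed hfree
  rw [nat_card_hallSubMulAction, Nat.card_units, hq, Nat.card_coe_set_eq,
    Set.ncard_pair hv] at hmod
  have hq1 : 1 ≤ q := hq ▸ Nat.card_pos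
  simpa [Nat.cast_sub hq1] using hmod.symm.dvd

/-- Lemma 5.1(2), case `X ≅ Y`: over a finite field `k` with `q` elements, for an
indecomposable `X` and `M = X ⊕ X`, one has `q − 1 ∣ G^{X⊕X}_{XX} − 2`. -/
theorem sub_one_dvd_hallNum_split_sub_two
    (q : ℕ) (k : Type) [Field k] [Finite k] (hq : Nat.card k = q)
    (A : Type) [Ring A] [Algebra k A] [Module.Finite k A]
    (X : Type)
    [AddCommGroup X] [Module k X] [Module A X] [IsScalarTower k A X] [Module.Finite k X]
    (hX : IsIndecomposableModule A X) :
    ((q : ℤ) - 1) ∣ (hallNum A (X × X) X X : ℤ) - 2 :=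
  sub_one_dvd_hallNum_split_sub_two_general q k hq A X hX
end

section
/- Let L be a free Z-module with basis {u_N} indexed by a set I of 'indecomposables', sitting inside an associative Z-algebra H with basis indexed by multisets of I (isomorphism classes of direct sums). Suppose that for all distinct basis indices X ≠ Y, the products satisfy u_X · u_Y = Σ_{Z ∈ I} a^Z_{XY} u_Z + u_{X⊕Y} and u_Y · u_X = Σ_{Z ∈ I} a^Z_{YX} u_Z + u_{X⊕Y} with integer coefficients, and u_X · u_X = Σ_{Z ∈ I} a^Z_{XX} u_Z + 2 u_{X⊕X}. Then L is closed under the commutator bracket [x,y] = xy − yx, i.e., L is a Lie subalgebra of H. -/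
/-! The commutator is bilinear, so the span of a set is closed under it as soon as the
commutators of the spanning elements lie in the span. For two indecomposables `u X`, `u Y`
with `X ≠ Y` both products carry the same decomposable term `w {X, Y}`, which cancels in
`u X * u Y - u Y * u X`; for `X = Y` the commutator is zero. -/

theorem Submodule.mul_sub_mul_mem_span_of_forall_mem_span {R A : Type*} [CommRing R] [Ring A]
    [Algebra R A] {s : Set A} (hs : ∀ a ∈ s, ∀ b ∈ s, a * b - b * a ∈ span R s) {x y : A}
    (hx : x ∈ span R s) (hy : y ∈ span R s) : x * y - y * x ∈ span R s := by
  let commutator := LinearMap.mul R A - (LinearMap.mul R A).flip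
  have hspan : span R (Set.image2 (fun a b => commutator a b) s s) ≤ span R s := by
    rw [span_le]
    rintro _ ⟨a, ha, b, hb, rfl⟩
    simpa [commutator] using hs a ha b hb
  have hxy : commutator x y ∈ span R (Set.image2 (fun a b => commutator a b) s s) :=
    map₂_span_span R commutator s s ▸ apply_mem_map₂ commutator hx hy
  simpa [commutator] using hspan hxy

theorem span_indecomposables_closed_under_commutator_general
    (H : Type*) [Ring H] (I : Type*)
    (w : Multiset I → H) (u : I → H)
    (hmul : ∀ X Y : I, X ≠ Y →
      (∃ c : I →₀ ℤ, u X * u Y = (c.sum fun Z n => n • u Z) + w {X, Y}) ∧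
      (∃ c : I →₀ ℤ, u Y * u X = (c.sum fun Z n => n • u Z) + w {X, Y})) :
    ∀ x ∈ Submodule.span ℤ (Set.range u), ∀ y ∈ Submodule.span ℤ (Set.range u),
      x * y - y * x ∈ Submodule.span ℤ (Set.range u) := by
  intro x hx y hy
  refine Submodule.mul_sub_mul_mem_span_of_forall_mem_span ?_ hx hy
  rintro _ ⟨X, rfl⟩ _ ⟨Y, rfl⟩
  obtain rfl | hXY := eq_or_ne X Y
  · simp
  obtain ⟨⟨c, hc⟩, c', hc'⟩ := hmul X Y hXY
  rw [hc, hc', add_sub_add_right_eq_sub]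
  exact sub_mem (Finsupp.mem_span_range_iff_exists_finsupp.2 ⟨c, rfl⟩)
    (Finsupp.mem_span_range_iff_exists_finsupp.2 ⟨c', rfl⟩)

/-- The abstract mechanism behind Theorem 5.2: let `H` be an associative ring with a
linearly independent family `w` indexed by multisets of a set `I` of "indecomposables"
(isomorphism classes of direct sums), `u X = w {X}` being the indecomposable basis
elements. If for all `X ≠ Y` the products `u X * u Y` and `u Y * u X` are an integral
combination of indecomposables plus the decomposable term `w {X, Y}`, and
`u X * u X` is an integral combination of indecomposables plus `2 • w {X, X}`, then
the span `L` of the indecomposables is closed under the commutator bracket, i.e. `L`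
is a Lie subalgebra of `H`. -/
theorem span_indecomposables_closed_under_commutator
    (H : Type*) [Ring H] (I : Type*)
    (w : Multiset I → H) (u : I → H)
    (hbasis : LinearIndependent ℤ w)
    (hu : ∀ X : I, u X = w {X})
    (hmul : ∀ X Y : I, X ≠ Y →
      (∃ c : I →₀ ℤ, u X * u Y = (c.sum fun Z n => n • u Z) + w {X, Y}) ∧
      (∃ c : I →₀ ℤ, u Y * u X = (c.sum fun Z n => n • u Z) + w {X, Y}))
    (hsq : ∀ X : I, ∃ c : I →₀ ℤ,
      u X * u X = (c.sum fun Z n => n • u Z) + 2 • w {X, X}) :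
    ∀ x ∈ Submodule.span ℤ (Set.range u), ∀ y ∈ Submodule.span ℤ (Set.range u),
      x * y - y * x ∈ Submodule.span ℤ (Set.range u) :=
  span_indecomposables_closed_under_commutator_general H I w u hmul
end
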